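/- arXiv:1604.01214 — 5 statements merged into one kernel-verified Lean document; each statement's English description precedes it below -/
import Mathlib

section
/- Let g be analytic on D and suppose T_g : H^∞ → H^∞ is bounded with operator norm ‖T_g‖. Then for every Möbius transformation φ of D onto itself, T_{g∘φ} : H^∞ → H^∞ is bounded with ‖T_{g∘φ}‖ ≤ 2‖T_g‖. -/
/-!
Let `φ` be the Möbius map and `ψ = φ⁻¹`. If `G` is a primitive of `(f ∘ ψ) · g'` on the disc,
then `G ∘ φ` is a primitive of `f · (g ∘ φ)'`, and `T_h u (z) = z ∫₀¹ u(tz) h'(tz) dt` equals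
`P z - P 0` for any primitive `P` of `u · h'`. Hence
`T_{g∘φ} f (z) = T_g (f ∘ ψ) (φ z) - T_g (f ∘ ψ) (φ 0)`, and since `f ∘ ψ` has the same sup bound
as `f`, each of the two terms is at most `‖T_g‖ ‖f‖_∞`.
-/

open Metric MeasureTheory

/-- The integral operator `T_g(f)(z) = ∫₀^z f(ζ) g'(ζ) dζ` along the segment from `0` to `z`. -/
noncomputable def Tg (g f : ℂ → ℂ) (z : ℂ) : ℂ :=
  z * ∫ t in (0:ℝ)..1, f ((t:ℂ) * z) * deriv g ((t:ℂ) * z)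

/-- `T_g` is bounded on `H^∞` with bound `M`: for every bounded analytic `f` on the disc,
`‖T_g f‖_∞ ≤ M · ‖f‖_∞` (expressed via sup bounds). -/
def TgBoundedBy (g : ℂ → ℂ) (M : ℝ) : Prop :=
  ∀ f : ℂ → ℂ, DifferentiableOn ℂ f (ball (0:ℂ) 1) →
    ∀ B : ℝ, (∀ z ∈ ball (0:ℂ) 1, ‖f z‖ ≤ B) →
      ∀ z ∈ ball (0:ℂ) 1, ‖Tg g f z‖ ≤ M * B

open ComplexConjugate Set

noncomputable def mobius (a z : ℂ) : ℂ := (a - z) / (1 - conj a * z)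

lemma normSq_one_sub_conj_mul_sub_normSq_sub (a z : ℂ) :
    Complex.normSq (1 - conj a * z) - Complex.normSq (a - z) =
      (1 - Complex.normSq a) * (1 - Complex.normSq z) := by
  simp only [Complex.normSq_apply, Complex.sub_re, Complex.sub_im, Complex.mul_re,
    Complex.mul_im, Complex.one_re, Complex.one_im, Complex.conj_re, Complex.conj_im]
  ring

section mobius

variable {a z : ℂ}

lemma one_sub_conj_mul_ne_zero (ha : a ∈ ball (0:ℂ) 1) (hz : z ∈ ball (0:ℂ) 1) :
    1 - conj a * z ≠ 0 := by
  rw [mem_ball_zero_iff] at ha hz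
  refine sub_ne_zero.2 fun h => ?_
  have : ‖conj a * z‖ < 1 := by
    rw [norm_mul, Complex.norm_conj]
    nlinarith [norm_nonneg a, norm_nonneg z]
  rw [← h, norm_one] at this
  exact this.false

lemma mobius_mem_ball (ha : a ∈ ball (0:ℂ) 1) (hz : z ∈ ball (0:ℂ) 1) :
    mobius a z ∈ ball (0:ℂ) 1 := by
  have hd := one_sub_conj_mul_ne_zero ha hz
  rw [mem_ball_zero_iff] at *
  have ha' : Complex.normSq a < 1 := by
    rw [Complex.normSq_eq_norm_sq]; nlinarith [norm_nonneg a]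
  have hz' : Complex.normSq z < 1 := by
    rw [Complex.normSq_eq_norm_sq]; nlinarith [norm_nonneg z]
  have hlt : Complex.normSq (a - z) < Complex.normSq (1 - conj a * z) := by
    nlinarith [normSq_one_sub_conj_mul_sub_normSq_sub a z]
  rw [mobius, norm_div, div_lt_one (norm_pos_iff.2 hd)]
  simpa only [Complex.normSq_eq_norm_sq, sq_lt_sq₀ (norm_nonneg _) (norm_nonneg _)] using hlt

lemma mobius_mobius (ha : a ∈ ball (0:ℂ) 1) (hz : z ∈ ball (0:ℂ) 1) :
    mobius a (mobius a z) = z := by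
  have hz' := one_sub_conj_mul_ne_zero ha hz
  have ha' := one_sub_conj_mul_ne_zero ha ha
  have hnum : a - mobius a z = z * (1 - conj a * a) / (1 - conj a * z) := by
    rw [mobius, eq_div_iff hz', sub_mul, div_mul_cancel₀ _ hz']; ring
  have hden : 1 - conj a * mobius a z = (1 - conj a * a) / (1 - conj a * z) := by
    rw [mobius, eq_div_iff hz', sub_mul, mul_assoc, div_mul_cancel₀ _ hz']; ring
  rw [mobius, hnum, hden, div_div_div_cancel_right₀ hz', mul_div_cancel_right₀ _ ha']

lemma differentiableOn_mobius (ha : a ∈ ball (0:ℂ) 1) :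
    DifferentiableOn ℂ (mobius a) (ball (0:ℂ) 1) :=
  ((differentiableOn_const a).sub differentiableOn_id).div
    ((differentiableOn_const 1).sub (differentiableOn_id.const_mul _))
    fun _ hw => one_sub_conj_mul_ne_zero ha hw

end mobius

lemma ofReal_mul_mem_ball {R t : ℝ} {z : ℂ} (hz : z ∈ ball (0:ℂ) R) (ht : t ∈ Icc (0:ℝ) 1) :
    (t:ℂ) * z ∈ ball (0:ℂ) R := by
  rw [← Complex.real_smul]
  exact (convex_ball 0 R).smul_mem_of_zero_mem (mem_ball_self (pos_of_mem_ball hz)) hz ht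

theorem mul_integral_comp_ofReal_mul_eq_sub {F h : ℂ → ℂ} {R : ℝ}
    (hF : ∀ w ∈ ball (0:ℂ) R, HasDerivAt F (h w) w) (hh : ContinuousOn h (ball (0:ℂ) R))
    {z : ℂ} (hz : z ∈ ball (0:ℂ) R) :
    z * ∫ t in (0:ℝ)..1, h ((t:ℂ) * z) = F z - F 0 := by
  have hseg : ∀ t ∈ uIcc (0:ℝ) 1, (t:ℂ) * z ∈ ball (0:ℂ) R := fun t ht =>
    ofReal_mul_mem_ball hz (by rwa [uIcc_of_le zero_le_one] at ht)
  have hderiv : ∀ t ∈ uIcc (0:ℝ) 1,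
      HasDerivAt (fun s : ℝ => F ((s:ℂ) * z)) (h ((t:ℂ) * z) * z) t := fun t ht =>
    ((hF _ (hseg t ht)).comp (t:ℂ) (hasDerivAt_mul_const z)).comp_ofReal
  have hint : IntervalIntegrable (fun t : ℝ => h ((t:ℂ) * z) * z) volume 0 1 :=
    ((hh.comp (Complex.continuous_ofReal.mul continuous_const).continuousOn hseg).mul
      continuousOn_const).intervalIntegrable
  rw [mul_comm, ← intervalIntegral.integral_mul_const,
    intervalIntegral.integral_eq_sub_of_hasDerivAt hderiv hint]
  simp

section Tg

variable {f g : ℂ → ℂ}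

theorem exists_primitive_Tg_eq_sub (hf : DifferentiableOn ℂ f (ball (0:ℂ) 1))
    (hg : DifferentiableOn ℂ g (ball (0:ℂ) 1)) :
    ∃ F : ℂ → ℂ, (∀ w ∈ ball (0:ℂ) 1, HasDerivAt F (f w * deriv g w) w) ∧
      ∀ z ∈ ball (0:ℂ) 1, Tg g f z = F z - F 0 := by
  have hfg : DifferentiableOn ℂ (fun w => f w * deriv g w) (ball (0:ℂ) 1) :=
    hf.mul (hg.deriv isOpen_ball)
  obtain ⟨F, hF⟩ := hfg.isExactOn_ball
  exact ⟨F, hF, fun z hz => mul_integral_comp_ofReal_mul_eq_sub hF hfg.continuousOn hz⟩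

variable {φ ψ : ℂ → ℂ}

theorem Tg_comp_eq_sub (hf : DifferentiableOn ℂ f (ball (0:ℂ) 1))
    (hg : DifferentiableOn ℂ g (ball (0:ℂ) 1))
    (hφ : DifferentiableOn ℂ φ (ball (0:ℂ) 1)) (hφ_maps : MapsTo φ (ball 0 1) (ball 0 1))
    (hψ : DifferentiableOn ℂ ψ (ball (0:ℂ) 1)) (hψ_maps : MapsTo ψ (ball 0 1) (ball 0 1))
    (hψφ : ∀ z ∈ ball (0:ℂ) 1, ψ (φ z) = z) {z : ℂ} (hz : z ∈ ball (0:ℂ) 1) :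
    Tg (g ∘ φ) f z = Tg g (f ∘ ψ) (φ z) - Tg g (f ∘ ψ) (φ 0) := by
  obtain ⟨G, hG, hTG⟩ := exists_primitive_Tg_eq_sub (hf.comp hψ hψ_maps) hg
  have hgφ : DifferentiableOn ℂ (g ∘ φ) (ball (0:ℂ) 1) := hg.comp hφ hφ_maps
  have hGφ : ∀ w ∈ ball (0:ℂ) 1, HasDerivAt (G ∘ φ) (f w * deriv (g ∘ φ) w) w := by
    intro w hw
    have hφw := (hφ.differentiableAt (isOpen_ball.mem_nhds hw)).hasDerivAt
    have hgw := (hg.differentiableAt (isOpen_ball.mem_nhds (hφ_maps hw))).hasDerivAt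
    rw [(hgw.comp w hφw).deriv, ← mul_assoc]
    simpa only [Function.comp_apply, hψφ w hw] using (hG _ (hφ_maps hw)).comp w hφw
  have hcont : ContinuousOn (fun w => f w * deriv (g ∘ φ) w) (ball (0:ℂ) 1) :=
    (hf.mul (hgφ.deriv isOpen_ball)).continuousOn
  rw [hTG _ (hφ_maps hz), hTG _ (hφ_maps (mem_ball_self one_pos)), sub_sub_sub_cancel_right]
  exact mul_integral_comp_ofReal_mul_eq_sub hGφ hcont hz

end Tg

theorem TgBoundedBy.comp {g φ ψ : ℂ → ℂ} {M : ℝ} (hM : TgBoundedBy g M)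
    (hg : DifferentiableOn ℂ g (ball (0:ℂ) 1))
    (hφ : DifferentiableOn ℂ φ (ball (0:ℂ) 1)) (hφ_maps : MapsTo φ (ball 0 1) (ball 0 1))
    (hψ : DifferentiableOn ℂ ψ (ball (0:ℂ) 1)) (hψ_maps : MapsTo ψ (ball 0 1) (ball 0 1))
    (hψφ : ∀ z ∈ ball (0:ℂ) 1, ψ (φ z) = z) :
    TgBoundedBy (g ∘ φ) (2 * M) := by
  intro f hf B hB z hz
  have hbound : ∀ w ∈ ball (0:ℂ) 1, ‖Tg g (f ∘ ψ) w‖ ≤ M * B :=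
    hM _ (hf.comp hψ hψ_maps) B fun w hw => hB _ (hψ_maps hw)
  rw [Tg_comp_eq_sub hf hg hφ hφ_maps hψ hψ_maps hψφ hz]
  calc _ ≤ ‖Tg g (f ∘ ψ) (φ z)‖ + ‖Tg g (f ∘ ψ) (φ 0)‖ := norm_sub_le _ _
    _ ≤ M * B + M * B :=
        add_le_add (hbound _ (hφ_maps hz)) (hbound _ (hφ_maps (mem_ball_self one_pos)))
    _ = 2 * M * B := by ring

theorem stmt2 (g : ℂ → ℂ) (hg : DifferentiableOn ℂ g (ball (0:ℂ) 1))
    (M : ℝ) (hM : TgBoundedBy g M) :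
    ∀ ξ a : ℂ, ‖ξ‖ = 1 → a ∈ ball (0:ℂ) 1 →
      TgBoundedBy (fun z => g (ξ * ((a - z) / (1 - (starRingEnd ℂ) a * z)))) (2 * M) := by
  intro ξ a hξ ha
  have hrot : ∀ c : ℂ, ‖c‖ = 1 → MapsTo (c * ·) (ball (0:ℂ) 1) (ball 0 1) := fun c hc w hw => by
    simpa [hc] using hw
  have hξ_conj : ‖conj ξ‖ = 1 := by rwa [Complex.norm_conj]
  have hξ_inv : conj ξ * ξ = 1 := by rw [Complex.conj_mul', hξ]; norm_num
  refine hM.comp (φ := fun z => ξ * mobius a z) (ψ := fun w => mobius a (conj ξ * w)) hg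
    ((differentiableOn_mobius ha).const_mul ξ) ((hrot ξ hξ).comp fun _ => mobius_mem_ball ha)
    ((differentiableOn_mobius ha).comp (differentiableOn_id.const_mul _) (hrot _ hξ_conj))
    (fun _ hw => mobius_mem_ball ha (hrot _ hξ_conj hw)) fun z hz => ?_
  rw [← mul_assoc, hξ_inv, one_mul, mobius_mobius ha hz]
end

section
/- For the atomic singular inner function S(z) = exp((z+1)/(z−1)), the radial variation is uniformly bounded: sup over θ ∈ (−π,π] of ∫₀¹ |S'(te^{iθ})| dt < ∞. Explicitly, ∫₀¹ (2/|1−te^{iθ}|²)·exp(−(1−t²)/|1−te^{iθ}|²) dt is bounded by a constant independent of θ. -/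
open MeasureTheory Real

/-- The atomic singular inner function `S(z) = exp((z+1)/(z-1))`. -/
noncomputable def atomicS (z : ℂ) : ℂ := Complex.exp ((z + 1) / (z - 1))

/-!
Write `k = |1 - e^{iθ}|²`. Then `|1 - te^{iθ}|² = (1 - t)² + tk`, and with `e^{-u} ≤ 2/(1 + u)²`
applied to `u = (1 - t²)/|1 - te^{iθ}|² ≥ (1 - t)/|1 - te^{iθ}|²` the integrand is at most
`4 + 4k/(1 - t + tk)²`. The second term has the antiderivative `4kt/(1 - t + tk)`, so the integral
is at most `8` whatever `θ` is; on `[0, 1)` the integrand is exactly `|S'(te^{iθ})|`.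
-/

open intervalIntegral Set

lemma Real.exp_neg_le_two_div_one_add_sq {u : ℝ} (hu : 0 ≤ u) :
    exp (-u) ≤ 2 / (1 + u) ^ 2 := by
  rw [exp_neg, inv_le_comm₀ (exp_pos u) (by positivity), inv_div]
  nlinarith [quadratic_le_exp_of_nonneg hu]

lemma Complex.norm_one_sub_ofReal_mul_sq {w : ℂ} (hw : ‖w‖ = 1) (t : ℝ) :
    ‖1 - (t : ℂ) * w‖ ^ 2 = (1 - t) ^ 2 + t * ‖1 - w‖ ^ 2 := by
  have hw' : w.re * w.re + w.im * w.im = 1 := by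
    rw [← Complex.normSq_apply, ← Complex.sq_norm, hw, one_pow]
  simp only [Complex.sq_norm, Complex.normSq_apply, Complex.sub_re, Complex.sub_im,
    Complex.mul_re, Complex.mul_im, Complex.one_re, Complex.one_im, Complex.ofReal_re,
    Complex.ofReal_im]
  linear_combination (t ^ 2 - t) * hw'

lemma two_div_mul_exp_le {t k r : ℝ} (ht₀ : 0 ≤ t) (ht₁ : t ≤ 1) (hk : 0 ≤ k)
    (hr : r = (1 - t) ^ 2 + t * k) :
    2 / r * exp (-(1 - t ^ 2) / r) ≤ 4 + 4 * (k / (1 - t + t * k) ^ 2) := by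
  have hrhs : 0 ≤ 4 + 4 * (k / (1 - t + t * k) ^ 2) := by positivity
  rcases (show 0 ≤ r by rw [hr]; positivity).eq_or_lt with hr₀ | hr₀
  · simpa [← hr₀] using hrhs -- `2 / 0 = 0`
  set a := 1 - t
  have ha₀ : 0 ≤ a := by linarith
  have hd : 0 < a + t * k := by nlinarith [mul_nonneg ht₀ hk]
  have hexp : exp (-(1 - t ^ 2) / r) ≤ 2 / (1 + a / r) ^ 2 := by
    rw [neg_div]
    refine (exp_neg_le_two_div_one_add_sq (div_nonneg (by nlinarith) hr₀.le)).trans ?_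
    gcongr
    nlinarith
  calc 2 / r * exp (-(1 - t ^ 2) / r)
      ≤ 2 / r * (2 / (1 + a / r) ^ 2) := by gcongr
    _ = 4 * (a ^ 2 / (r + a) ^ 2) + 4 * (t * k / (r + a) ^ 2) := by
        field_simp
        rw [hr]
        ring
    _ ≤ 4 + 4 * (k / (a + t * k) ^ 2) := by
        have h₁ : a ^ 2 / (r + a) ^ 2 ≤ 1 :=
          (div_le_one (by positivity)).2 (pow_le_pow_left₀ ha₀ (by linarith) 2)
        have h₂ : t * k / (r + a) ^ 2 ≤ k / (a + t * k) ^ 2 :=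
          div_le_div₀ hk (by nlinarith) (by positivity)
            (pow_le_pow_left₀ hd.le (by nlinarith) 2)
        linarith

lemma one_sub_add_mul_pos {t k : ℝ} (ht : t ∈ Icc (0:ℝ) 1) (hk : 0 < k) : 0 < 1 - t + t * k := by
  rcases le_total k 1 with h | h <;> nlinarith [ht.1, ht.2]

lemma continuousOn_div_sq_one_sub_add_mul {k : ℝ} (hk : 0 < k) :
    ContinuousOn (fun t : ℝ => k / (1 - t + t * k) ^ 2) (Icc 0 1) :=
  continuousOn_const.div (by fun_prop) fun t ht => (pow_pos (one_sub_add_mul_pos ht hk) 2).ne'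

lemma intervalIntegrable_div_sq_one_sub_add_mul {k : ℝ} (hk : 0 ≤ k) :
    IntervalIntegrable (fun t : ℝ => k / (1 - t + t * k) ^ 2) volume 0 1 := by
  rcases hk.eq_or_lt with rfl | hk
  · simp
  exact (continuousOn_div_sq_one_sub_add_mul hk).intervalIntegrable_of_Icc zero_le_one

lemma integral_div_sq_one_sub_add_mul_le {k : ℝ} (hk : 0 ≤ k) :
    ∫ t in (0:ℝ)..1, k / (1 - t + t * k) ^ 2 ≤ 1 := by
  rcases hk.eq_or_lt with rfl | hk
  · simp
  have hderiv : ∀ t ∈ uIcc (0:ℝ) 1,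
      HasDerivAt (fun s => k * s / (1 - s + s * k)) (k / (1 - t + t * k) ^ 2) t := by
    intro t ht
    rw [uIcc_of_le zero_le_one] at ht
    refine (((hasDerivAt_id' t).const_mul k).div (((hasDerivAt_id' t).const_sub 1).add
      ((hasDerivAt_id' t).mul_const k)) (one_sub_add_mul_pos ht hk).ne').congr_deriv ?_
    simp only [Pi.add_apply]
    field_simp
    ring
  rw [integral_eq_sub_of_hasDerivAt hderiv (intervalIntegrable_div_sq_one_sub_add_mul hk.le)]
  simp [hk.ne']

lemma integral_two_div_mul_exp_le {w : ℂ} (hw : ‖w‖ = 1) :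
    ∫ t in (0:ℝ)..1, 2 / ‖1 - (t:ℂ) * w‖ ^ 2 * exp (-(1 - t ^ 2) / ‖1 - (t:ℂ) * w‖ ^ 2) ≤ 8 := by
  set k := ‖1 - w‖ ^ 2
  have hk : 0 ≤ k := by positivity
  have hint := intervalIntegrable_div_sq_one_sub_add_mul hk
  have hmaj := (intervalIntegrable_const (c := (4:ℝ))).add (hint.const_mul 4)
  calc ∫ t in (0:ℝ)..1, 2 / ‖1 - (t:ℂ) * w‖ ^ 2 * exp (-(1 - t ^ 2) / ‖1 - (t:ℂ) * w‖ ^ 2)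
      ≤ ∫ t in (0:ℝ)..1, 4 + 4 * (k / (1 - t + t * k) ^ 2) := by
        -- domination by an integrable majorant, so no integrability of the left side is needed
        rw [integral_of_le zero_le_one, integral_of_le zero_le_one]
        refine integral_mono_of_nonneg (ae_of_all _ fun t => by positivity) hmaj.1
          (ae_restrict_of_forall_mem measurableSet_Ioc fun t ht => ?_)
        exact two_div_mul_exp_le ht.1.le ht.2 hk (Complex.norm_one_sub_ofReal_mul_sq hw t)
    _ = 4 + 4 * ∫ t in (0:ℝ)..1, k / (1 - t + t * k) ^ 2 := by
        rw [integral_add intervalIntegrable_const (hint.const_mul 4),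
          intervalIntegral.integral_const_mul]
        simp
    _ ≤ 8 := by linarith [integral_div_sq_one_sub_add_mul_le hk]

lemma Complex.re_add_one_div_sub_one (z : ℂ) :
    ((z + 1) / (z - 1)).re = -(1 - ‖z‖ ^ 2) / ‖1 - z‖ ^ 2 := by
  rw [Complex.div_re, ← add_div, norm_sub_rev, Complex.sq_norm, Complex.sq_norm]
  congr 1
  simp only [Complex.normSq_apply, Complex.add_re, Complex.sub_re, Complex.add_im,
    Complex.sub_im, Complex.one_re, Complex.one_im]
  ring

lemma hasDerivAt_atomicS {z : ℂ} (hz : z ≠ 1) :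
    HasDerivAt atomicS (atomicS z * (-2 / (z - 1) ^ 2)) z := by
  have hz' : z - 1 ≠ 0 := sub_ne_zero.mpr hz
  refine (((hasDerivAt_id' z).add_const 1).div ((hasDerivAt_id' z).sub_const 1) hz').cexp
    |>.congr_deriv ?_
  simp only [atomicS, Pi.div_apply]
  field_simp
  ring

lemma norm_deriv_atomicS {z : ℂ} (hz : z ≠ 1) :
    ‖deriv atomicS z‖ = 2 / ‖1 - z‖ ^ 2 * exp (-(1 - ‖z‖ ^ 2) / ‖1 - z‖ ^ 2) := by
  rw [(hasDerivAt_atomicS hz).deriv, atomicS, norm_mul, Complex.norm_exp,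
    Complex.re_add_one_div_sub_one, norm_div, norm_pow, norm_sub_rev z 1]
  norm_num
  ring

lemma integral_norm_deriv_atomicS_eq {w : ℂ} (hw : ‖w‖ = 1) :
    ∫ t in (0:ℝ)..1, ‖deriv atomicS ((t:ℂ) * w)‖ =
      ∫ t in (0:ℝ)..1, 2 / ‖1 - (t:ℂ) * w‖ ^ 2 * exp (-(1 - t ^ 2) / ‖1 - (t:ℂ) * w‖ ^ 2) := by
  refine integral_congr_Ioo_of_le zero_le_one fun t ht => ?_
  have hnorm : ‖(t:ℂ) * w‖ = t := by simp [hw, abs_of_pos ht.1]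
  have hz : (t:ℂ) * w ≠ 1 := fun h => by
    rw [h, norm_one] at hnorm
    exact ht.2.ne hnorm.symm
  simp only [norm_deriv_atomicS hz, hnorm]

theorem stmt4 :
    ∃ C : ℝ, ∀ θ : ℝ,
      (∫ t in (0:ℝ)..1, ‖deriv atomicS ((t:ℂ) * Complex.exp (θ * Complex.I))‖) ≤ C ∧
      (∫ t in (0:ℝ)..1,
        (2 / ‖1 - (t:ℂ) * Complex.exp (θ * Complex.I)‖ ^ 2) *
          Real.exp (-(1 - t ^ 2) / ‖1 - (t:ℂ) * Complex.exp (θ * Complex.I)‖ ^ 2))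
        ≤ C := by
  refine ⟨8, fun θ => ?_⟩
  have hw := Complex.norm_exp_ofReal_mul_I θ
  have hbound := integral_two_div_mul_exp_le hw
  exact ⟨(integral_norm_deriv_atomicS_eq hw).trans_le hbound, hbound⟩
end

section
/- Let g(z) = a₀ + Σ_{k≥1} a_k z^{n_k} be a lacunary series with Hadamard gaps (n_{k+1}/n_k ≥ λ > 1 for all k). Then g ∈ H^∞ if and only if Σ_k |a_k| < ∞. -/
/-!
That `∑ ‖a k‖ < ∞` bounds `g` is immediate. Conversely, choose `s` with `λ ^ s` so large that
along each residue class `k = j * s + r` the exponents `ν j = n k` are dissociate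
(`2 ∑_{i<j} ν i < ν j`) and every other exponent `n k'` differs from `ν j` by more than
`∑_{i<j} ν i`. Pair `G θ = g (ρ e^{iθ}) - a₀` with the Riesz product
`∏_{j<N} (1 + Re (u j e^{i ν j θ}))`. Being nonnegative with mean one, it bounds the pairing by
`2π sup ‖G‖`; multiplying out the product, the frequencies of `G` meet it only at the `ν j`, so
for `u j` the phase of the `j`-th coefficient the pairing equals `π ∑_{j<N} ‖a k‖ ρ ^ ν j`.
Letting `ρ → 1` bounds every residue class, hence the whole series.
-/

open Metric Complex Finset MeasureTheory
open scoped Real Topology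

theorem integral_exp_int_mul_mul_I (m : ℤ) :
    ∫ θ in (0:ℝ)..2 * π, exp (m * θ * I) = if m = 0 then ((2 * π : ℝ) : ℂ) else 0 := by
  split_ifs with hm
  · simp [hm]
  have hc : (m : ℂ) * I ≠ 0 := by simp [hm, I_ne_zero]
  simp_rw [mul_right_comm _ _ I]
  rw [integral_exp_mul_complex hc, ofReal_zero, mul_zero, exp_zero, ofReal_mul,
    show (m : ℂ) * I * (↑(2 : ℝ) * π) = m * (2 * π * I) by push_cast; ring,
    exp_int_mul_two_pi_mul_I, sub_self, zero_div]

noncomputable def rieszProduct (ν : ℕ → ℕ) (u : ℕ → ℂ) (N : ℕ) (θ : ℝ) : ℝ :=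
  ∏ j ∈ range N, (1 + (u j * exp (ν j * θ * I)).re)

noncomputable def rieszCoeff (ν : ℕ → ℕ) (u : ℕ → ℂ) (N : ℕ) (m : ℤ) : ℂ :=
  ∫ θ in (0:ℝ)..2 * π, exp (m * θ * I) * rieszProduct ν u N θ

namespace rieszProduct

variable (ν : ℕ → ℕ) (u : ℕ → ℂ)

theorem nonneg (hu : ∀ j, ‖u j‖ ≤ 1) (N : ℕ) (θ : ℝ) : 0 ≤ rieszProduct ν u N θ := by
  refine prod_nonneg fun j _ => ?_
  have h : ‖u j * exp (ν j * θ * I)‖ ≤ 1 := by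
    rw [norm_mul, ← ofReal_natCast, ← ofReal_mul, norm_exp_ofReal_mul_I, mul_one]; exact hu j
  linarith [abs_re_le_norm (u j * exp (ν j * θ * I)), neg_abs_le (u j * exp (ν j * θ * I)).re]

@[fun_prop]
theorem continuous (N : ℕ) : Continuous (rieszProduct ν u N) := by
  unfold rieszProduct; fun_prop

theorem succ (N : ℕ) (θ : ℝ) : (rieszProduct ν u (N + 1) θ : ℂ) =
    rieszProduct ν u N θ * (1 + u N / 2 * exp (ν N * θ * I)
      + (starRingEnd ℂ) (u N) / 2 * exp (-(ν N * θ * I))) := by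
  rw [rieszProduct, prod_range_succ, ← rieszProduct, ofReal_mul, ofReal_add, ofReal_one,
    re_eq_add_conj, map_mul, ← exp_conj]
  simp only [map_mul, conj_natCast, conj_ofReal, conj_I]
  ring_nf

end rieszProduct

section rieszCoeff

variable (ν : ℕ → ℕ) (u : ℕ → ℂ)

theorem rieszCoeff_zero_left (m : ℤ) :
    rieszCoeff ν u 0 m = if m = 0 then ((2 * π : ℝ) : ℂ) else 0 := by
  simp [rieszCoeff, rieszProduct, integral_exp_int_mul_mul_I]

theorem rieszCoeff_succ (N : ℕ) (m : ℤ) :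
    rieszCoeff ν u (N + 1) m = rieszCoeff ν u N m + u N / 2 * rieszCoeff ν u N (m + ν N)
      + starRingEnd ℂ (u N) / 2 * rieszCoeff ν u N (m - ν N) := by
  have hint (k : ℤ) : IntervalIntegrable (fun θ : ℝ => exp (k * θ * I) * rieszProduct ν u N θ)
      volume 0 (2 * π) := by
    apply Continuous.intervalIntegrable; fun_prop
  simp only [rieszCoeff, ← intervalIntegral.integral_const_mul,
    ← intervalIntegral.integral_add (hint m) ((hint _).const_mul _),
    ← intervalIntegral.integral_add ((hint m).add ((hint _).const_mul _)) ((hint _).const_mul _)]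
  congr 1 with θ
  simp only [rieszProduct.succ, Int.cast_add, Int.cast_sub, Int.cast_natCast, add_mul, sub_mul,
    exp_add, exp_sub, exp_neg]
  ring

theorem rieszCoeff_eq_zero_of_sum_lt_natAbs {N : ℕ} {m : ℤ}
    (h : ∑ j ∈ range N, ν j < m.natAbs) : rieszCoeff ν u N m = 0 := by
  induction N generalizing m with
  | zero =>
    rw [rieszCoeff_zero_left, if_neg (by simp at h; omega)]
  | succ N ih =>
    rw [sum_range_succ] at h
    rw [rieszCoeff_succ, ih (by omega), ih (by omega), ih (by omega)]
    ring

variable {ν} (hdis : ∀ N, 2 * ∑ j ∈ range N, ν j < ν N)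
include hdis

theorem rieszCoeff_zero_right (N : ℕ) : rieszCoeff ν u N 0 = ((2 * π : ℝ) : ℂ) := by
  induction N with
  | zero => simp [rieszCoeff_zero_left]
  | succ N ih =>
    have := hdis N
    rw [rieszCoeff_succ, ih, rieszCoeff_eq_zero_of_sum_lt_natAbs ν u (by omega),
      rieszCoeff_eq_zero_of_sum_lt_natAbs ν u (by omega)]
    ring

theorem rieszCoeff_natCast_of_lt {N j : ℕ} (hj : j < N) :
    rieszCoeff ν u N (ν j) = π * starRingEnd ℂ (u j) := by
  induction N with
  | zero => omega
  | succ N ih =>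
    have hN := hdis N
    rw [rieszCoeff_succ]
    rcases (Nat.lt_succ_iff_lt_or_eq.mp hj) with hj | rfl
    · have := single_le_sum (fun i _ => Nat.zero_le (ν i)) (mem_range.mpr hj)
      rw [ih hj, rieszCoeff_eq_zero_of_sum_lt_natAbs ν u (by omega),
        rieszCoeff_eq_zero_of_sum_lt_natAbs ν u (by omega)]
      ring
    · rw [rieszCoeff_eq_zero_of_sum_lt_natAbs ν u (by omega),
        rieszCoeff_eq_zero_of_sum_lt_natAbs ν u (by omega), sub_self,
        rieszCoeff_zero_right u hdis]
      push_cast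
      ring

theorem rieszCoeff_natCast_eq_zero {N v : ℕ} (hv : 0 < v)
    (hsep : ∀ j < N, ∑ i ∈ range j, ν i < ((v : ℤ) - ν j).natAbs) :
    rieszCoeff ν u N v = 0 := by
  induction N with
  | zero => simp [rieszCoeff_zero_left, hv.ne']
  | succ N ih =>
    have hN := hdis N
    have hvN := hsep N N.lt_succ_self
    rw [rieszCoeff_succ, ih fun j hj => hsep j (Nat.lt_succ_of_lt hj),
      rieszCoeff_eq_zero_of_sum_lt_natAbs ν u (by omega),
      rieszCoeff_eq_zero_of_sum_lt_natAbs ν u (by omega)]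
    ring

end rieszCoeff

section Pairing

variable {ν : ℕ → ℕ} {u : ℕ → ℂ}

theorem hasSum_integral_mul_rieszProduct {b : ℕ → ℂ} {m : ℕ → ℕ} (hb : Summable fun k => ‖b k‖)
    {F : ℝ → ℂ} (hF : ∀ θ : ℝ, HasSum (fun k => b k * exp (m k * θ * I)) (F θ)) (N : ℕ) :
    HasSum (fun k => b k * rieszCoeff ν u N (m k))
      (∫ θ in (0:ℝ)..2 * π, F θ * rieszProduct ν u N θ) := by
  have hterm (k : ℕ) : b k * rieszCoeff ν u N (m k)
      = ∫ θ in (0:ℝ)..2 * π, b k * exp (m k * θ * I) * rieszProduct ν u N θ := by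
    simp only [rieszCoeff, mul_assoc, intervalIntegral.integral_const_mul, Int.cast_natCast]
  simp only [hterm]
  refine intervalIntegral.hasSum_integral_of_dominated_convergence
    (fun k θ => ‖b k‖ * |rieszProduct ν u N θ|) (fun k => by fun_prop) (fun k => ?_)
    (Filter.Eventually.of_forall fun θ _ => hb.mul_right _) ?_
    (Filter.Eventually.of_forall fun θ _ => (hF θ).mul_right _)
  · refine Filter.Eventually.of_forall fun θ _ => ?_
    rw [norm_mul, norm_mul, norm_real, Real.norm_eq_abs, ← ofReal_natCast, ← ofReal_mul,
      norm_exp_ofReal_mul_I, mul_one]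
  · simp_rw [tsum_mul_right]
    exact Continuous.intervalIntegrable (by fun_prop) _ _

variable (hdis : ∀ N, 2 * ∑ j ∈ range N, ν j < ν N)
include hdis

theorem integral_rieszProduct (N : ℕ) : ∫ θ in (0:ℝ)..2 * π, rieszProduct ν u N θ = 2 * π := by
  have h := rieszCoeff_zero_right u hdis N
  simp only [rieszCoeff, Int.cast_zero, zero_mul, exp_zero, one_mul,
    intervalIntegral.integral_ofReal] at h
  exact_mod_cast h

theorem norm_integral_mul_rieszProduct_le (hu : ∀ j, ‖u j‖ ≤ 1) {F : ℝ → ℂ} {M : ℝ}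
    (hF : ∀ θ, ‖F θ‖ ≤ M) (N : ℕ) :
    ‖∫ θ in (0:ℝ)..2 * π, F θ * rieszProduct ν u N θ‖ ≤ 2 * π * M := by
  have hle : ∀ θ, ‖F θ * rieszProduct ν u N θ‖ ≤ M * rieszProduct ν u N θ := fun θ => by
    rw [norm_mul, norm_real, Real.norm_of_nonneg (rieszProduct.nonneg ν u hu N θ)]
    exact mul_le_mul_of_nonneg_right (hF θ) (rieszProduct.nonneg ν u hu N θ)
  calc _ ≤ ∫ θ in (0:ℝ)..2 * π, M * rieszProduct ν u N θ :=
        intervalIntegral.norm_integral_le_of_norm_le (by positivity)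
          (Filter.Eventually.of_forall fun θ _ => hle θ)
          ((rieszProduct.continuous ν u N).intervalIntegrable _ _ |>.const_mul M)
    _ = 2 * π * M := by rw [intervalIntegral.integral_const_mul, integral_rieszProduct hdis]; ring

end Pairing

theorem mul_conj_div_norm (z : ℂ) : z * starRingEnd ℂ (z / ‖z‖) = ‖z‖ := by
  rcases eq_or_ne z 0 with rfl | hz
  · simp
  rw [map_div₀, conj_ofReal, mul_div_assoc', mul_conj', pow_two, mul_div_assoc,
    div_self (ofReal_ne_zero.mpr (norm_ne_zero_iff.mpr hz)), mul_one]

theorem sum_norm_le_of_dissociate {b : ℕ → ℂ} {m : ℕ → ℕ} (hb : Summable fun k => ‖b k‖)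
    {F : ℝ → ℂ} (hF : ∀ θ : ℝ, HasSum (fun k => b k * exp (m k * θ * I)) (F θ))
    {M : ℝ} (hM : ∀ θ, ‖F θ‖ ≤ M) (hm : ∀ k, 0 < m k)
    {κ : ℕ → ℕ} (hκ : Function.Injective κ)
    (hdis : ∀ N, 2 * ∑ j ∈ range N, m (κ j) < m (κ N)) {N : ℕ}
    (hsep : ∀ k ∉ (range N).image κ, ∀ j < N,
      ∑ i ∈ range j, m (κ i) < ((m k : ℤ) - m (κ j)).natAbs) :
    ∑ j ∈ range N, ‖b (κ j)‖ ≤ 2 * M := by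
  set u : ℕ → ℂ := fun j => b (κ j) / ‖b (κ j)‖
  have hu (j : ℕ) : ‖u j‖ ≤ 1 := by
    simp only [u, norm_div, norm_real, norm_norm]
    exact div_self_le_one _
  have hoff : ∀ k ∉ (range N).image κ, b k * rieszCoeff (fun j => m (κ j)) u N (m k) = 0 :=
    fun k hk => by rw [rieszCoeff_natCast_eq_zero u hdis (hm k) (hsep k hk), mul_zero]
  have hdiag : ∀ j ∈ range N,
      b (κ j) * rieszCoeff (fun j => m (κ j)) u N (m (κ j)) = π * ‖b (κ j)‖ := fun j hj => by
    rw [rieszCoeff_natCast_of_lt u hdis (mem_range.mp hj), mul_left_comm, mul_conj_div_norm]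
  have hpair :=
    (hasSum_integral_mul_rieszProduct hb hF N).unique (hasSum_sum_of_ne_finset_zero hoff)
  rw [sum_image hκ.injOn, sum_congr rfl hdiag, ← mul_sum] at hpair
  have hbound := norm_integral_mul_rieszProduct_le hdis hu hM N
  rw [hpair, ← ofReal_sum, ← ofReal_mul, norm_real,
    Real.norm_of_nonneg (by positivity)] at hbound
  nlinarith [Real.pi_pos]

section Hadamard

variable {n : ℕ → ℕ} {lam : ℝ} (hgap : ∀ k, lam * n k ≤ n (k + 1))
include hgap

theorem pow_mul_le_of_gap (hlam : 0 ≤ lam) (k t : ℕ) : lam ^ t * n k ≤ n (k + t) := by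
  induction t with
  | zero => simp
  | succ t ih =>
    calc lam ^ (t + 1) * n k = lam * (lam ^ t * n k) := by ring
      _ ≤ lam * n (k + t) := by gcongr
      _ ≤ n (k + (t + 1)) := hgap _

theorem mul_le_or_mul_le_of_gap (hlam : 1 ≤ lam) {i k : ℕ} (hik : i ≠ k) :
    lam * n i ≤ n k ∨ lam * n k ≤ n i := by
  wlog h : i < k generalizing i k
  · exact (this hik.symm (by omega)).symm
  obtain ⟨t, rfl⟩ := Nat.exists_eq_add_of_lt h
  left
  calc lam * n i ≤ n (i + 1) := hgap i
    _ ≤ lam ^ t * n (i + 1) := le_mul_of_one_le_left (by positivity) (one_le_pow₀ hlam)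
    _ ≤ n (i + 1 + t) := pow_mul_le_of_gap hgap (by linarith) _ _
    _ = n (i + t + 1) := by rw [add_right_comm]

theorem injective_of_gap (hlam : 1 < lam) (hn : ∀ k, 0 < n k) : Function.Injective n := by
  intro i k hik
  by_contra hne
  have hpos : (0 : ℝ) < n k := by exact_mod_cast hn k
  rcases mul_le_or_mul_le_of_gap hgap hlam.le hne with h | h <;> rw [hik] at h <;> nlinarith

end Hadamard

section Lacunary

variable {ν : ℕ → ℕ} {q : ℝ} (hgrow : ∀ j, q * ν j ≤ ν (j + 1))
include hgrow

theorem sub_one_mul_sum_range_le (N : ℕ) : (q - 1) * ∑ j ∈ range N, (ν j : ℝ) ≤ ν N := by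
  induction N with
  | zero => simp
  | succ N ih => rw [sum_range_succ]; linarith [hgrow N]

variable (hν : ∀ j, 0 < ν j)
include hν

theorem two_mul_sum_range_lt (hq : 3 < q) (N : ℕ) : 2 * ∑ j ∈ range N, ν j < ν N := by
  have hB := sub_one_mul_sum_range_le hgrow N
  have hB0 : (0 : ℝ) ≤ ∑ j ∈ range N, (ν j : ℝ) := by positivity
  have hνN : (1 : ℝ) ≤ ν N := by exact_mod_cast hν N
  suffices (2 : ℝ) * ∑ j ∈ range N, (ν j : ℝ) < ν N by exact_mod_cast this
  nlinarith

theorem sum_range_lt_natAbs_sub {lam : ℝ} (hlam : 1 < lam) (hq : 2 * lam ≤ (q - 1) * (lam - 1))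
    {v j : ℕ} (hv : lam * ν j ≤ v ∨ lam * v ≤ ν j) :
    ∑ i ∈ range j, ν i < ((v : ℤ) - ν j).natAbs := by
  have hB := sub_one_mul_sum_range_le hgrow j
  have hB0 : 0 ≤ ∑ i ∈ range j, (ν i : ℝ) := by positivity
  have hνj : (1 : ℝ) ≤ ν j := by exact_mod_cast hν j
  have hv0 : (0 : ℝ) ≤ v := v.cast_nonneg
  have hsep : (lam - 1) * ν j ≤ lam * |(v : ℝ) - ν j| := by
    rcases hv with h | h
    · have hvν : (ν j : ℝ) ≤ v := by nlinarith
      rw [abs_of_nonneg (by linarith)]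
      nlinarith [mul_nonneg (sub_nonneg.2 hlam.le) (sub_nonneg.2 hvν)]
    · rw [abs_of_nonpos (by nlinarith)]; nlinarith
  have key : ∑ i ∈ range j, (ν i : ℝ) < |(v : ℝ) - ν j| := by nlinarith
  rw [← Nat.cast_lt (α := ℝ), Nat.cast_natAbs]
  push_cast
  exact key

end Lacunary

theorem exists_pow_sub_one_mul_sub_one_ge {lam : ℝ} (hlam : 1 < lam) :
    ∃ s : ℕ, 0 < s ∧ 2 * lam ≤ (lam ^ s - 1) * (lam - 1) := by
  obtain ⟨s, hs, hs1⟩ := ((tendsto_pow_atTop_atTop_of_one_lt hlam).eventually_ge_atTop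
    (1 + 2 * lam / (lam - 1))).and (Filter.eventually_ge_atTop 1) |>.exists
  refine ⟨s, hs1, ?_⟩
  have h := mul_le_mul_of_nonneg_right (sub_le_sub_right hs 1) (sub_nonneg.2 hlam.le)
  rwa [add_sub_cancel_left, div_mul_cancel₀ _ (sub_ne_zero.2 hlam.ne')] at h

theorem summable_norm_mul_pow_of_summable {a : ℕ → ℂ} {n : ℕ → ℕ} (hn : Function.Injective n)
    {r ρ : ℝ} (h : Summable fun k => a k * (r : ℂ) ^ n k) (hρ : 0 ≤ ρ) (hρr : ρ < r) :
    Summable fun k => ‖a k‖ * ρ ^ n k := by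
  have hr : 0 < r := hρ.trans_lt hρr
  obtain ⟨C, hC⟩ := h.tendsto_atTop_zero.norm.bddAbove_range
  have hgeom : Summable fun k => C * (ρ / r) ^ n k :=
    ((summable_geometric_of_lt_one (by positivity) ((div_lt_one hr).2 hρr)).comp_injective
      hn).mul_left C
  refine hgeom.of_nonneg_of_le (fun k => by positivity) fun k => ?_
  have hk : ‖a k‖ * r ^ n k ≤ C := by
    simpa [norm_mul, norm_pow, norm_real, abs_of_pos hr] using hC (Set.mem_range_self k)
  calc ‖a k‖ * ρ ^ n k = ‖a k‖ * r ^ n k * (ρ / r) ^ n k := by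
        rw [div_pow, mul_assoc, mul_div_cancel₀ _ (pow_ne_zero _ hr.ne')]
    _ ≤ C * (ρ / r) ^ n k := by gcongr

theorem sum_le_of_forall_sum_mul_pow_le {ι : Type*} (S : Finset ι) (c : ι → ℝ) (e : ι → ℕ)
    {C : ℝ} (h : ∀ ρ ∈ Set.Ioo (0 : ℝ) 1, ∑ i ∈ S, c i * ρ ^ e i ≤ C) : ∑ i ∈ S, c i ≤ C := by
  have hlim : Filter.Tendsto (fun ρ : ℝ => ∑ i ∈ S, c i * ρ ^ e i) (𝓝[<] 1)
      (𝓝 (∑ i ∈ S, c i)) := by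
    simpa using ((by fun_prop : Continuous fun ρ : ℝ => ∑ i ∈ S, c i * ρ ^ e i).tendsto 1).mono_left
      nhdsWithin_le_nhds
  exact le_of_tendsto hlim (Filter.eventually_of_mem (Ioo_mem_nhdsLT zero_lt_one) h)

theorem summable_of_sum_range_mul_add_le {f : ℕ → ℝ} (hf : ∀ k, 0 ≤ f k) {s : ℕ} (hs : 0 < s)
    {C : ℝ} (h : ∀ r N, ∑ j ∈ range N, f (j * s + r) ≤ C) : Summable f := by
  have : NeZero s := ⟨hs.ne'⟩
  rw [← (Nat.divModEquiv s).symm.summable_iff]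
  refine (summable_prod_of_nonneg fun p => hf _).mpr ⟨fun j => .of_finite, ?_⟩
  simp only [tsum_fintype, Nat.divModEquiv_symm_apply]
  exact summable_sum fun r _ => summable_of_sum_range_le (fun j => hf _) (h r)

section LacunarySeries

variable {g : ℂ → ℂ} {a₀ : ℂ} {a : ℕ → ℂ} {n : ℕ → ℕ} {lam M : ℝ}

theorem norm_le_of_summable_norm
    (hrep : ∀ z ∈ ball (0:ℂ) 1, HasSum (fun k => a k * z ^ n k) (g z - a₀))
    (ha : Summable fun k => ‖a k‖) {z : ℂ} (hz : z ∈ ball (0:ℂ) 1) :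
    ‖g z‖ ≤ ‖a₀‖ + ∑' k, ‖a k‖ := by
  have hz1 : ‖z‖ ≤ 1 := (mem_ball_zero_iff.mp hz).le
  have hterm (k : ℕ) : ‖a k * z ^ n k‖ ≤ ‖a k‖ := by
    rw [norm_mul, norm_pow]
    exact mul_le_of_le_one_right (norm_nonneg _) (pow_le_one₀ (norm_nonneg z) hz1)
  calc ‖g z‖ ≤ ‖a₀‖ + ‖g z - a₀‖ := norm_le_insert' _ _
    _ ≤ ‖a₀‖ + ∑' k, ‖a k‖ := by gcongr; exact (hrep z hz).norm_le_of_bounded ha.hasSum hterm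

variable (hlam : 1 < lam) (hgap : ∀ k, lam * n k ≤ n (k + 1)) (hn : ∀ k, 1 ≤ n k)
  (hrep : ∀ z ∈ ball (0:ℂ) 1, HasSum (fun k => a k * z ^ n k) (g z - a₀))
include hlam hgap hn hrep

theorem sum_norm_mul_pow_le_of_bounded (hM : ∀ z ∈ ball (0:ℂ) 1, ‖g z‖ ≤ M) {s : ℕ} (hs : 0 < s)
    (hq : 2 * lam ≤ (lam ^ s - 1) * (lam - 1)) (r N : ℕ) {ρ : ℝ} (hρ0 : 0 ≤ ρ) (hρ1 : ρ < 1) :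
    ∑ j ∈ range N, ‖a (j * s + r)‖ * ρ ^ n (j * s + r) ≤ 2 * (M + ‖a₀‖) := by
  have hz {w : ℂ} (hw : ‖w‖ ≤ 1) : (ρ : ℂ) * w ∈ ball (0:ℂ) 1 := by
    rw [mem_ball_zero_iff, norm_mul, norm_real, Real.norm_of_nonneg hρ0]
    nlinarith [norm_nonneg w]
  have hnorm (k : ℕ) : ‖a k * (ρ : ℂ) ^ n k‖ = ‖a k‖ * ρ ^ n k := by
    rw [norm_mul, norm_pow, norm_real, Real.norm_of_nonneg hρ0]
  have hr : (((1 + ρ) / 2 : ℝ) : ℂ) ∈ ball (0:ℂ) 1 := by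
    rw [mem_ball_zero_iff, norm_real, Real.norm_of_nonneg (by linarith)]
    linarith
  have hb : Summable fun k => ‖a k * (ρ : ℂ) ^ n k‖ := by
    simpa only [hnorm] using summable_norm_mul_pow_of_summable
      (injective_of_gap hgap hlam hn) (hrep _ hr).summable hρ0 (by linarith)
  have hF (θ : ℝ) : HasSum (fun k => a k * (ρ : ℂ) ^ n k * exp (n k * θ * I))
      (g (ρ * exp (θ * I)) - a₀) := by
    simpa only [mul_pow, ← exp_nat_mul, mul_assoc] using
      hrep _ (hz (norm_exp_ofReal_mul_I θ).le)
  have hM' (θ : ℝ) : ‖g (ρ * exp (θ * I)) - a₀‖ ≤ M + ‖a₀‖ :=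
    (norm_sub_le _ _).trans (by gcongr; exact hM _ (hz (norm_exp_ofReal_mul_I θ).le))
  have hgrow (j : ℕ) : lam ^ s * n (j * s + r) ≤ n ((j + 1) * s + r) := by
    rw [show (j + 1) * s + r = j * s + r + s by ring]
    exact pow_mul_le_of_gap hgap (by linarith) _ _
  have hν (j : ℕ) : 0 < n (j * s + r) := hn _
  have hκ : Function.Injective fun j => j * s + r := fun i j hij => by
    simpa [hs.ne'] using hij
  have hsep : ∀ k ∉ (range N).image (fun j => j * s + r), ∀ j < N,
      ∑ i ∈ range j, n (i * s + r) < ((n k : ℤ) - n (j * s + r)).natAbs := fun k hk j hj =>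
    have hne : j * s + r ≠ k := fun h => hk (mem_image.mpr ⟨j, mem_range.mpr hj, h⟩)
    sum_range_lt_natAbs_sub hgrow hν hlam hq (mul_le_or_mul_le_of_gap hgap hlam.le hne)
  simpa only [hnorm] using sum_norm_le_of_dissociate hb hF hM' hn hκ
    (two_mul_sum_range_lt hgrow hν (by nlinarith)) hsep

theorem summable_norm_of_bounded (hM : ∀ z ∈ ball (0:ℂ) 1, ‖g z‖ ≤ M) :
    Summable fun k => ‖a k‖ := by
  obtain ⟨s, hs, hq⟩ := exists_pow_sub_one_mul_sub_one_ge hlam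
  refine summable_of_sum_range_mul_add_le (C := 2 * (M + ‖a₀‖)) (fun k => norm_nonneg _) hs
    fun r N => ?_
  exact sum_le_of_forall_sum_mul_pow_le _ _ _ fun ρ hρ =>
    sum_norm_mul_pow_le_of_bounded hlam hgap hn hrep hM hs hq r N hρ.1.le hρ.2

end LacunarySeries

theorem stmt5_general (g : ℂ → ℂ)
    (a₀ : ℂ) (a : ℕ → ℂ) (n : ℕ → ℕ) (lam : ℝ) (hlam : 1 < lam)
    (hgap : ∀ k : ℕ, lam * (n k : ℝ) ≤ (n (k + 1) : ℝ)) (hn : ∀ k, 1 ≤ n k)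
    (hrep : ∀ z ∈ ball (0:ℂ) 1, HasSum (fun k => a k * z ^ n k) (g z - a₀)) :
    (∃ M : ℝ, ∀ z ∈ ball (0:ℂ) 1, ‖g z‖ ≤ M) ↔
      Summable (fun k => ‖a k‖) :=
  ⟨fun ⟨_, hM⟩ => summable_norm_of_bounded hlam hgap hn hrep hM,
    fun ha => ⟨‖a₀‖ + ∑' k, ‖a k‖, fun _ hz => norm_le_of_summable_norm hrep ha hz⟩⟩

theorem stmt5 (g : ℂ → ℂ) (hg : DifferentiableOn ℂ g (ball (0:ℂ) 1))
    (a₀ : ℂ) (a : ℕ → ℂ) (n : ℕ → ℕ) (lam : ℝ) (hlam : 1 < lam)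
    (hgap : ∀ k : ℕ, lam * (n k : ℝ) ≤ (n (k + 1) : ℝ)) (hn : ∀ k, 1 ≤ n k)
    (hrep : ∀ z ∈ ball (0:ℂ) 1, HasSum (fun k => a k * z ^ n k) (g z - a₀)) :
    (∃ M : ℝ, ∀ z ∈ ball (0:ℂ) 1, ‖g z‖ ≤ M) ↔
      Summable (fun k => ‖a k‖) :=
  stmt5_general g a₀ a n lam hlam hgap hn hrep
end

section
/- Let g be a nonconstant analytic function on D. Then sup_{z∈D} sup_{w∈D} | Σ_{k=0}^∞ ( Σ_{n=0}^∞ (n+1)ĝ(n+1) z^{n+k+1}/(n+k+1) ) w̄^k | = ∞. Equivalently, the family of functions G_{g,z}(w) = conjugate of ∫₀^z g'(ζ)/(1−w̄ζ)dζ is not uniformly bounded in H^∞ over z ∈ D. -/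
open Metric

/-!
On the diagonal `w = z`, `|z| = r`, summing over `k` first uses `z z̄ = r²` and turns the double
series into the power series `z ∑ₙ ĝ(n+1) Bₙ(r²) zⁿ` with
`Bₙ(t) = ∑ₖ (n+1)/(n+k+1) tᵏ ≥ ∑ₖ tᵏ/(k+1) ≥ log (1/(1-t))`.
A bound `M` on the double series would then give, by Cauchy's estimate on the circle `|z| = r`,
`|ĝ(N+1)| log (1/(1-r²)) r^(N+1) ≤ M` for every `r < 1`, which fails as `r → 1`.
-/

open Filter Topology Complex MeasureTheory
open scoped Real

theorem summable_norm_mul_pow_of_summable_mul_pow {𝕜 : Type*} [NormedField 𝕜] {c : ℕ → 𝕜}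
    {x : 𝕜} {r : ℝ} (hr : 0 ≤ r) (hrx : r < ‖x‖) (hc : Summable fun n => c n * x ^ n) :
    Summable fun n => ‖c n‖ * r ^ n := by
  obtain ⟨C, hC⟩ := hc.tendsto_atTop_zero.norm.bddAbove_range
  have hx : 0 < ‖x‖ := hr.trans_lt hrx
  refine .of_nonneg_of_le (fun n => by positivity) (fun n => ?_)
    ((summable_geometric_of_lt_one (by positivity) ((div_lt_one hx).2 hrx)).mul_left C)
  calc ‖c n‖ * r ^ n = ‖c n * x ^ n‖ * (r / ‖x‖) ^ n := by
        rw [norm_mul, norm_pow, div_pow]; field_simp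
    _ ≤ C * (r / ‖x‖) ^ n := by gcongr; exact hC ⟨n, rfl⟩

theorem integral_exp_int_mul_I (m : ℤ) :
    ∫ θ in (0 : ℝ)..2 * π, exp (m * θ * I) = if m = 0 then 2 * π else 0 := by
  split_ifs with hm
  · simp [hm]
  · have hmI : (m : ℂ) * I ≠ 0 := mul_ne_zero (by exact_mod_cast hm) I_ne_zero
    have h := integral_exp_mul_complex (a := 0) (b := 2 * π) hmI
    simp_rw [mul_right_comm (m : ℂ) _ I]
    rw [h]
    have h2πI : (m : ℂ) * I * ((2 * π : ℝ) : ℂ) = m * (2 * π * I) := by push_cast; ring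
    rw [h2πI, exp_int_mul_two_pi_mul_I]
    simp

/-- Cauchy's estimate for an absolutely convergent power series, obtained from the `N`-th Fourier
coefficient of `θ ↦ ∑ aₙ (r e^{iθ})ⁿ`. -/
theorem norm_coeff_mul_pow_le_of_forall_norm_tsum_le {a : ℕ → ℂ} {r M : ℝ} (hr : 0 ≤ r)
    (ha : Summable fun n => ‖a n‖ * r ^ n)
    (hM : ∀ ζ : ℂ, ‖ζ‖ = r → ‖∑' n, a n * ζ ^ n‖ ≤ M) (N : ℕ) :
    ‖a N‖ * r ^ N ≤ M := by
  set F : ℕ → ℝ → ℂ := fun n θ => a n * r ^ n * exp (((n : ℤ) - N : ℤ) * θ * I)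
  have hF_norm (n : ℕ) (θ : ℝ) : ‖F n θ‖ = ‖a n‖ * r ^ n := by
    rw [norm_mul, norm_mul, norm_pow, norm_real, Real.norm_of_nonneg hr, mul_right_comm,
      ← ofReal_intCast, ← ofReal_mul, norm_exp_ofReal_mul_I, mul_one]
  have hF_tsum (θ : ℝ) :
      ∑' n, F n θ = (∑' n, a n * (r * exp (θ * I)) ^ n) * exp (-(N * θ * I)) := by
    rw [← tsum_mul_right]
    refine tsum_congr fun n => ?_
    rw [mul_pow, ← exp_nat_mul, mul_assoc, mul_assoc, ← exp_add]
    simp only [F]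
    push_cast
    ring_nf
  have hF_integral (n : ℕ) :
      ∫ θ in (0 : ℝ)..2 * π, F n θ = if n = N then 2 * π * a N * r ^ N else 0 := by
    simp only [F, intervalIntegral.integral_const_mul, integral_exp_int_mul_I, sub_eq_zero,
      Nat.cast_inj]
    split_ifs with h
    · subst h; push_cast; ring
    · simp
  have hsum : HasSum (fun n => ∫ θ in (0 : ℝ)..2 * π, F n θ)
      (∫ θ in (0 : ℝ)..2 * π, ∑' n, F n θ) := by
    refine intervalIntegral.hasSum_integral_of_dominated_convergence (fun n _ => ‖a n‖ * r ^ n)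
      (fun n => (by fun_prop : Continuous (F n)).aestronglyMeasurable)
      (fun n => ae_of_all _ fun θ _ => (hF_norm n θ).le) (ae_of_all _ fun _ _ => ha)
      intervalIntegrable_const (ae_of_all _ fun θ _ => ?_)
    exact (ha.of_norm_bounded fun n => (hF_norm n θ).le).hasSum
  have hvalue : ∫ θ in (0 : ℝ)..2 * π, ∑' n, F n θ = 2 * π * a N * r ^ N := by
    rw [← hsum.tsum_eq, tsum_congr hF_integral, tsum_ite_eq]
  have hbound : ‖∫ θ in (0 : ℝ)..2 * π, ∑' n, F n θ‖ ≤ M * |2 * π - 0| := by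
    refine intervalIntegral.norm_integral_le_of_norm_le_const fun θ _ => ?_
    have hζ : ‖(r : ℂ) * exp (θ * I)‖ = r := by
      rw [norm_mul, norm_exp_ofReal_mul_I, norm_real, Real.norm_of_nonneg hr, mul_one]
    rw [hF_tsum, norm_mul, norm_exp]
    simpa using hM _ hζ
  have h2π : ‖(2 * π : ℂ)‖ = 2 * π := by simp [Real.pi_pos.le]
  rw [hvalue, norm_mul, norm_mul, h2π, norm_pow, norm_real, Real.norm_of_nonneg hr, sub_zero,
    abs_of_pos Real.two_pi_pos, mul_assoc, mul_comm M] at hbound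
  exact le_of_mul_le_mul_left hbound Real.two_pi_pos

lemma add_one_div_add_add_one_le_one (n k : ℕ) : ((n : ℝ) + 1) / (n + k + 1) ≤ 1 :=
  div_le_one_of_le₀ (by linarith [(k.cast_nonneg : (0 : ℝ) ≤ k)]) (by positivity)

noncomputable def diagonalWeight (n : ℕ) (t : ℝ) : ℝ :=
  ∑' k : ℕ, ((n : ℝ) + 1) / (n + k + 1) * t ^ k

section diagonalWeight

variable {n : ℕ} {t : ℝ}

lemma summable_diagonalWeight (ht0 : 0 ≤ t) (ht1 : t < 1) :
    Summable fun k : ℕ => ((n : ℝ) + 1) / (n + k + 1) * t ^ k :=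
  .of_nonneg_of_le (fun k => by positivity)
    (fun k => mul_le_of_le_one_left (by positivity) (add_one_div_add_add_one_le_one n k))
    (summable_geometric_of_lt_one ht0 ht1)

lemma diagonalWeight_nonneg (ht0 : 0 ≤ t) : 0 ≤ diagonalWeight n t :=
  tsum_nonneg fun k => by positivity

lemma diagonalWeight_le (ht0 : 0 ≤ t) (ht1 : t < 1) : diagonalWeight n t ≤ (1 - t)⁻¹ := by
  rw [← tsum_geometric_of_lt_one ht0 ht1]
  exact (summable_diagonalWeight ht0 ht1).tsum_le_tsum
    (fun k => mul_le_of_le_one_left (by positivity) (add_one_div_add_add_one_le_one n k))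
    (summable_geometric_of_lt_one ht0 ht1)

lemma neg_log_one_sub_le_diagonalWeight (ht0 : 0 ≤ t) (ht1 : t < 1) :
    -Real.log (1 - t) ≤ diagonalWeight n t := by
  refine hasSum_le (fun k => ?_)
    (Real.hasSum_pow_div_log_of_abs_lt_one (by rwa [abs_of_nonneg ht0]))
    (summable_diagonalWeight ht0 ht1).hasSum
  have hk : (1 : ℝ) / (k + 1) ≤ ((n : ℝ) + 1) / (n + k + 1) := by
    rw [div_le_div_iff₀ (by positivity) (by positivity)]
    nlinarith [(k.cast_nonneg : (0 : ℝ) ≤ k), (n.cast_nonneg : (0 : ℝ) ≤ n)]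
  calc t ^ (k + 1) / (k + 1) ≤ 1 / (k + 1) * t ^ k := by
        rw [one_div_mul_eq_div]
        exact div_le_div_of_nonneg_right (pow_le_pow_of_le_one ht0 ht1.le k.le_succ)
          (by positivity)
    _ ≤ _ := by gcongr

end diagonalWeight

/-- With `c = ĝ` this is `∑ₖ (∫₀^z g'(ζ) ζᵏ dζ) w̄ᵏ = ∫₀^z g'(ζ) / (1 - w̄ζ) dζ`, the conjugate of
`G_{g,z}(w)`. -/
noncomputable def primitiveKernel (c : ℕ → ℂ) (z w : ℂ) : ℂ :=
  ∑' k : ℕ, (∑' n : ℕ, (((n : ℂ) + 1) * c (n + 1) / ((n : ℂ) + (k : ℂ) + 1)) * z ^ (n + k + 1)) *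
    (starRingEnd ℂ w) ^ k

theorem primitiveKernel_self {c : ℕ → ℂ} {z : ℂ} (hz : ‖z‖ < 1)
    (hc : Summable fun n => ‖c n‖ * ‖z‖ ^ n) :
    primitiveKernel c z z = z * ∑' n, c (n + 1) * diagonalWeight n (‖z‖ ^ 2) * z ^ n := by
  set t := ‖z‖ ^ 2
  have ht0 : 0 ≤ t := by positivity
  have ht1 : t < 1 := by simp only [t]; nlinarith [norm_nonneg z]
  set w : ℕ → ℕ → ℝ := fun n k => ((n : ℝ) + 1) / (n + k + 1) * t ^ k
  have hterm (n k : ℕ) :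
      ((n : ℂ) + 1) * c (n + 1) / ((n : ℂ) + (k : ℂ) + 1) * z ^ (n + k + 1) *
        (starRingEnd ℂ z) ^ k = c (n + 1) * z ^ (n + 1) * (w n k : ℂ) := by
    rw [add_right_comm n k, pow_add, mul_assoc, mul_assoc, ← mul_pow, mul_conj']
    simp only [w, t]
    push_cast
    ring
  have hsummable : Summable fun p : ℕ × ℕ => c (p.1 + 1) * z ^ (p.1 + 1) * (w p.1 p.2 : ℂ) := by
    have hprod := ((summable_nat_add_iff 1).2 hc).mul_of_nonneg
      (summable_geometric_of_lt_one ht0 ht1) (fun n => by positivity) (fun k => by positivity)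
    refine hprod.of_norm_bounded fun p => ?_
    rw [norm_mul, norm_mul, norm_pow, norm_real, Real.norm_of_nonneg (by positivity)]
    exact mul_le_mul_of_nonneg_left
      (mul_le_of_le_one_left (by positivity) (add_one_div_add_add_one_le_one _ _)) (by positivity)
  calc primitiveKernel c z z
      = ∑' k, ∑' n, c (n + 1) * z ^ (n + 1) * (w n k : ℂ) := by
        simp only [primitiveKernel, ← tsum_mul_right, hterm]
    _ = ∑' n, c (n + 1) * z ^ (n + 1) * ∑' k, (w n k : ℂ) :=
        hsummable.tsum_comm.trans (tsum_congr fun n => tsum_mul_left)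
    _ = _ := by
        rw [← tsum_mul_left]
        refine tsum_congr fun n => ?_
        rw [← ofReal_tsum]
        simp only [diagonalWeight, w, t]
        ring

lemma tendsto_neg_log_one_sub_sq :
    Tendsto (fun r : ℝ => -Real.log (1 - r ^ 2)) (𝓝[<] 1) atTop := by
  refine tendsto_neg_atBot_atTop.comp (Real.tendsto_log_nhdsGT_zero.comp ?_)
  refine tendsto_nhdsWithin_iff.2 ⟨?_, ?_⟩
  · have h : Continuous fun r : ℝ => 1 - r ^ 2 := by fun_prop
    simpa using (h.tendsto 1).mono_left nhdsWithin_le_nhds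
  · filter_upwards [Ioo_mem_nhdsLT (show (0 : ℝ) < 1 by norm_num)] with r hr
    simp only [Set.mem_Ioi, sub_pos]
    nlinarith [hr.1, hr.2]

theorem norm_coeff_mul_neg_log_le_of_forall_norm_primitiveKernel_le {c : ℕ → ℂ} {r M : ℝ}
    (hr0 : 0 < r) (hr1 : r < 1) (hc : Summable fun n => ‖c n‖ * r ^ n)
    (hM : ∀ z : ℂ, ‖z‖ = r → ‖primitiveKernel c z z‖ ≤ M) (N : ℕ) :
    ‖c (N + 1)‖ * -Real.log (1 - r ^ 2) * r ^ (N + 1) ≤ M := by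
  have ht0 : 0 ≤ r ^ 2 := by positivity
  have ht1 : r ^ 2 < 1 := by nlinarith
  set a : ℕ → ℂ := fun n => c (n + 1) * diagonalWeight n (r ^ 2)
  have ha_norm (n : ℕ) : ‖a n‖ = ‖c (n + 1)‖ * diagonalWeight n (r ^ 2) := by
    rw [norm_mul, norm_real, Real.norm_of_nonneg (diagonalWeight_nonneg ht0)]
  have hc_succ : Summable fun n => ‖c (n + 1)‖ * r ^ n := by
    refine (summable_mul_right_iff hr0.ne').1 ?_
    simpa only [pow_succ, mul_assoc] using (summable_nat_add_iff 1).2 hc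
  have ha : Summable fun n => ‖a n‖ * r ^ n := by
    refine .of_nonneg_of_le (fun n => by positivity) (fun n => ?_)
      (hc_succ.mul_left (1 - r ^ 2)⁻¹)
    rw [ha_norm, mul_right_comm, mul_comm (1 - r ^ 2)⁻¹]
    exact mul_le_mul_of_nonneg_left (diagonalWeight_le ht0 ht1) (by positivity)
  have haM : ∀ ζ : ℂ, ‖ζ‖ = r → ‖∑' n, a n * ζ ^ n‖ ≤ M / r := by
    intro ζ hζ
    have h := hM ζ hζ
    rw [primitiveKernel_self (hζ ▸ hr1) (hζ ▸ hc), norm_mul, hζ] at h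
    rwa [le_div_iff₀ hr0, mul_comm]
  have hcoeff := norm_coeff_mul_pow_le_of_forall_norm_tsum_le hr0.le ha haM N
  rw [le_div_iff₀ hr0, ha_norm] at hcoeff
  calc ‖c (N + 1)‖ * -Real.log (1 - r ^ 2) * r ^ (N + 1)
      ≤ ‖c (N + 1)‖ * diagonalWeight N (r ^ 2) * r ^ N * r := by
        rw [pow_succ _ N, ← mul_assoc]
        gcongr
        exact neg_log_one_sub_le_diagonalWeight ht0 ht1
    _ ≤ M := hcoeff

theorem stmt10_general (g : ℂ → ℂ) (c : ℕ → ℂ)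
    (hc : ∀ z ∈ ball (0:ℂ) 1, HasSum (fun n => c n * z ^ n) (g z))
    (hnonconst : ∃ N : ℕ, c (N + 1) ≠ 0) :
    ∀ M : ℝ, ∃ z ∈ ball (0:ℂ) 1, ∃ w ∈ ball (0:ℂ) 1,
      M < ‖(∑' k : ℕ,
        (∑' n : ℕ, (((n : ℂ) + 1) * c (n + 1) / ((n : ℂ) + (k : ℂ) + 1)) * z ^ (n + k + 1)) *
          ((starRingEnd ℂ) w) ^ k)‖ := by
  obtain ⟨N, hN⟩ := hnonconst
  intro M
  have hlim : Tendsto (fun r : ℝ => ‖c (N + 1)‖ * -Real.log (1 - r ^ 2) * r ^ (N + 1))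
      (𝓝[<] 1) atTop := by
    refine (tendsto_neg_log_one_sub_sq.const_mul_atTop (norm_pos_iff.2 hN)).atTop_mul_pos
      one_pos ?_
    simpa using ((continuous_pow (N + 1)).tendsto (1 : ℝ)).mono_left nhdsWithin_le_nhds
  obtain ⟨r, hMr, hr0, hr1⟩ :=
    ((hlim.eventually_gt_atTop M).and (Ioo_mem_nhdsLT one_pos)).exists
  have hx : (((1 + r) / 2 : ℝ) : ℂ) ∈ ball (0 : ℂ) 1 := by
    rw [mem_ball_zero_iff, norm_real, Real.norm_of_nonneg (by linarith)]
    linarith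
  have hcr : Summable fun n => ‖c n‖ * r ^ n :=
    summable_norm_mul_pow_of_summable_mul_pow hr0.le
      (by rw [norm_real, Real.norm_of_nonneg (by linarith)]; linarith) (hc _ hx).summable
  by_contra! h
  refine hMr.not_ge
    (norm_coeff_mul_neg_log_le_of_forall_norm_primitiveKernel_le hr0 hr1 hcr (fun z hz => ?_) N)
  have hz' : z ∈ ball (0 : ℂ) 1 := by rwa [mem_ball_zero_iff, hz]
  exact h z hz' z hz'

theorem stmt10 (g : ℂ → ℂ) (c : ℕ → ℂ) (hg : DifferentiableOn ℂ g (ball (0:ℂ) 1))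
    (hc : ∀ z ∈ ball (0:ℂ) 1, HasSum (fun n => c n * z ^ n) (g z))
    (hnonconst : ∃ N : ℕ, c (N + 1) ≠ 0) :
    ∀ M : ℝ, ∃ z ∈ ball (0:ℂ) 1, ∃ w ∈ ball (0:ℂ) 1,
      M < ‖(∑' k : ℕ,
        (∑' n : ℕ, (((n : ℂ) + 1) * c (n + 1) / ((n : ℂ) + (k : ℂ) + 1)) * z ^ (n + k + 1)) *
          ((starRingEnd ℂ) w) ^ k)‖ :=
  stmt10_general g c hc hnonconst
end

section
/- Let X be a Banach space of analytic functions on the unit disc containing the disc algebra, closed under dilations f ↦ f_r with sup_{0<r<1}‖f_r‖_X ≤ C‖f‖_X, and with bounded point evaluations. Let g be analytic on D and let P̄ denote the closure of the polynomials in X. Then T_g : X → H^∞ is bounded if and only if T_g : P̄ → H^∞ is bounded, and the two operator norms are comparable (with constants depending only on C). -/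
/-! Dilation reduces the bound on `X` to the bound on the closure of the polynomials: by dominated
convergence `T_g(f_r)(z) → T_g(f)(z)` as `r → 1⁻`, while `‖f_r‖ ≤ C ‖f‖`. Each dilate `f_r` is
holomorphic beyond the closed disc, so its Taylor polynomials converge to it uniformly there, i.e.
in the disc algebra `A`. Since `J` need not be injective, `A` sits in `X` only as the closed
relation `{(a, x) | a = J x on the open disc} ⊆ A × X`; the open mapping theorem for its
(surjective) first projection lifts the uniform approximation to approximation in `X`, so `f_r`
lies in the closure of the polynomials. -/

open Metric MeasureTheory

open Filter Topology

lemma norm_ofReal_mul_le {t : ℝ} (ht : t ∈ Set.Icc (0:ℝ) 1) (w : ℂ) : ‖(t:ℂ) * w‖ ≤ ‖w‖ := by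
  rw [norm_mul, Complex.norm_real, Real.norm_of_nonneg ht.1]
  exact mul_le_of_le_one_left (norm_nonneg w) ht.2

lemma Tg_congr {g f₁ f₂ : ℂ → ℂ} (h : Set.EqOn f₁ f₂ (ball (0:ℂ) 1)) {z : ℂ}
    (hz : z ∈ ball (0:ℂ) 1) : Tg g f₁ z = Tg g f₂ z := by
  refine congrArg (z * ·) (intervalIntegral.integral_congr fun t ht => ?_)
  rw [Set.uIcc_of_le zero_le_one] at ht
  have htz : (t:ℂ) * z ∈ ball (0:ℂ) 1 := by
    rw [mem_ball_zero_iff] at hz ⊢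
    exact (norm_ofReal_mul_le ht z).trans_lt hz
  simp only [h htz]

lemma tendsto_Tg_dilation {g f : ℂ → ℂ} (hf : ContinuousOn f (ball (0:ℂ) 1))
    (hg : ContinuousOn (deriv g) (ball (0:ℂ) 1)) {z : ℂ} (hz : z ∈ ball (0:ℂ) 1) :
    Tendsto (fun r : ℝ => Tg g (fun w => f (r * w)) z) (𝓝[<] 1) (𝓝 (Tg g f z)) := by
  have hzK : closedBall (0:ℂ) ‖z‖ ⊆ ball (0:ℂ) 1 :=
    closedBall_subset_ball (mem_ball_zero_iff.mp hz)
  have hseg : ∀ t ∈ Set.Icc (0:ℝ) 1, (t:ℂ) * z ∈ closedBall (0:ℂ) ‖z‖ := fun t ht =>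
    mem_closedBall_zero_iff.mpr (norm_ofReal_mul_le ht z)
  have hdil : ∀ r ∈ Set.Ioo (0:ℝ) 1, ∀ t ∈ Set.Icc (0:ℝ) 1,
      (r:ℂ) * ((t:ℂ) * z) ∈ closedBall (0:ℂ) ‖z‖ := fun r hr t ht =>
    mem_closedBall_zero_iff.mpr ((norm_ofReal_mul_le (Set.Ioo_subset_Icc_self hr) _).trans
      (mem_closedBall_zero_iff.mp (hseg t ht)))
  obtain ⟨B₁, hB₁⟩ := (isCompact_closedBall (0:ℂ) ‖z‖).exists_bound_of_continuousOn (hf.mono hzK)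
  obtain ⟨B₂, hB₂⟩ := (isCompact_closedBall (0:ℂ) ‖z‖).exists_bound_of_continuousOn (hg.mono hzK)
  have hIoc : Set.uIoc (0:ℝ) 1 ⊆ Set.Icc 0 1 := by
    rw [Set.uIoc_of_le zero_le_one]; exact Set.Ioc_subset_Icc_self
  have hIoo : ∀ᶠ r in 𝓝[<] (1:ℝ), r ∈ Set.Ioo (0:ℝ) 1 := Ioo_mem_nhdsLT zero_lt_one
  refine Tendsto.const_mul z <|
    intervalIntegral.tendsto_integral_filter_of_dominated_convergence (fun _ => B₁ * B₂) ?_ ?_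
      intervalIntegrable_const ?_
  · filter_upwards [hIoo] with r hr
    refine ContinuousOn.aestronglyMeasurable (ContinuousOn.mul ?_ ?_) measurableSet_uIoc
    · exact hf.comp (by fun_prop) fun t ht => hzK (hdil r hr t (hIoc ht))
    · exact hg.comp (by fun_prop) fun t ht => hzK (hseg t (hIoc ht))
  · filter_upwards [hIoo] with r hr
    refine ae_of_all _ fun t ht => ?_
    rw [norm_mul]
    exact mul_le_mul (hB₁ _ (hdil r hr t (hIoc ht))) (hB₂ _ (hseg t (hIoc ht)))
      (norm_nonneg _) ((norm_nonneg _).trans (hB₁ _ (hdil r hr t (hIoc ht))))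
  · refine ae_of_all _ fun t ht => Tendsto.mul_const _ ?_
    have hr : Tendsto (fun r : ℝ => (r:ℂ) * ((t:ℂ) * z)) (𝓝[<] 1) (𝓝 ((t:ℂ) * z)) := by
      simpa using ((Complex.continuous_ofReal.tendsto 1).mono_left nhdsWithin_le_nhds).mul_const
        ((t:ℂ) * z)
    exact ((hf.continuousAt (isOpen_ball.mem_nhds (hzK (hseg t (hIoc ht))))).tendsto).comp hr

section OpenMapping

variable {𝕜 : Type*} [NontriviallyNormedField 𝕜]
  {E F : Type*} [NormedAddCommGroup E] [NormedSpace 𝕜 E] [CompleteSpace E]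
  [NormedAddCommGroup F] [NormedSpace 𝕜 F] [CompleteSpace F]

theorem ContinuousLinearMap.exists_tendsto_preimage_of_surjective (f : E →L[𝕜] F)
    (hf : Function.Surjective f) {ι : Type*} {l : Filter ι} {y : ι → F} {x₀ : E}
    (hy : Tendsto y l (𝓝 (f x₀))) : ∃ x : ι → E, (∀ i, f (x i) = y i) ∧ Tendsto x l (𝓝 x₀) := by
  obtain ⟨C, -, hC⟩ := f.exists_preimage_norm_le hf
  choose w hw hwC using hC
  refine ⟨fun i => x₀ + w (y i - f x₀), fun i => by simp [hw], ?_⟩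
  rw [tendsto_iff_norm_sub_tendsto_zero] at hy ⊢
  refine squeeze_zero (fun _ => norm_nonneg _) (fun i => ?_) (by simpa using hy.const_mul C)
  simpa using hwC (y i - f x₀)

theorem ContinuousLinearMap.exists_tendsto_of_range_subset
    {V : Type*} [TopologicalSpace V] [AddCommGroup V] [Module 𝕜 V] [IsTopologicalAddGroup V]
    [T2Space V] (ρ : E →L[𝕜] V) (j : F →L[𝕜] V) (hρj : Set.range ρ ⊆ Set.range j)
    {ι : Type*} {l : Filter ι} {a : ι → E} {a₀ : E} (ha : Tendsto a l (𝓝 a₀))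
    {x₀ : F} (hx₀ : j x₀ = ρ a₀) :
    ∃ x : ι → F, (∀ i, j (x i) = ρ (a i)) ∧ Tendsto x l (𝓝 x₀) := by
  set G := (ρ.comp (fst 𝕜 E F)).toLinearMap.eqLocus (j.comp (snd 𝕜 E F)).toLinearMap
  have hsurj : Function.Surjective ((fst 𝕜 E F).comp G.subtypeL) := fun a' => by
    obtain ⟨x, hx⟩ := hρj ⟨a', rfl⟩
    exact ⟨⟨(a', x), hx.symm⟩, rfl⟩
  obtain ⟨p, hp, hpt⟩ := ((fst 𝕜 E F).comp G.subtypeL).exists_tendsto_preimage_of_surjective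
    hsurj (x₀ := ⟨(a₀, x₀), hx₀.symm⟩) ha
  refine ⟨fun i => (p i).1.2, fun i => ?_,
    ((continuous_snd.comp continuous_subtype_val).tendsto _).comp hpt⟩
  have := (p i).2
  simp only [G, LinearMap.mem_eqLocus] at this
  simpa [← hp i] using this.symm

end OpenMapping

lemma FormalMultilinearSeries.partialSum_eq_eval (p : FormalMultilinearSeries ℂ ℂ ℂ) (n : ℕ)
    (z : ℂ) : p.partialSum n z =
      (∑ k ∈ Finset.range n, Polynomial.C (p.coeff k) * Polynomial.X ^ k).eval z := by
  simp only [partialSum, Polynomial.eval_finsetSum, Polynomial.eval_mul, Polynomial.eval_pow,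
    Polynomial.eval_C, Polynomial.eval_X, apply_eq_pow_smul_coeff, smul_eq_mul, mul_comm]

theorem exists_polynomial_tendstoUniformlyOn_closedBall {H : ℂ → ℂ} {ρ R : ℝ} (hρ : 0 ≤ ρ)
    (hρR : ρ < R) (hH : DifferentiableOn ℂ H (ball (0:ℂ) R)) :
    ∃ q : ℕ → Polynomial ℂ,
      TendstoUniformlyOn (fun n z => (q n).eval z) H atTop (closedBall (0:ℂ) ρ) := by
  obtain ⟨S, hρS, hSR⟩ := exists_between hρR
  obtain ⟨S', hρS', hS'S⟩ := exists_between hρS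
  lift S to NNReal using hρ.trans hρS.le
  lift S' to NNReal using hρ.trans hρS'.le
  have hpow := (hH.mono (closedBall_subset_ball hSR)).hasFPowerSeriesOnBall
    (NNReal.coe_pos.mp (hρ.trans_lt hρS))
  refine ⟨fun n => ∑ k ∈ Finset.range n,
    Polynomial.C ((cauchyPowerSeries H 0 S).coeff k) * Polynomial.X ^ k, ?_⟩
  simp_rw [← FormalMultilinearSeries.partialSum_eq_eval]
  simpa using (hpow.tendstoUniformlyOn (r' := S') (by exact_mod_cast hS'S)).mono
    (closedBall_subset_ball hρS')

lemma ContinuousMap.continuousOn_extend_val {α β : Type*} [TopologicalSpace α]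
    [TopologicalSpace β] {s : Set α} (f : C(s, β)) (g : α → β) :
    ContinuousOn (Function.extend ((↑) : s → α) f g) s := by
  rw [continuousOn_iff_continuous_domRestrict]
  convert f.continuous using 1
  funext x
  exact Subtype.val_injective.extend_apply f g x

lemma tendstoUniformlyOn_extend_val_of_mem_closure_polynomialFunctions {s : Set ℂ}
    [CompactSpace s] {f : C(s, ℂ)}
    (hf : f ∈ (polynomialFunctions s).toSubmodule.topologicalClosure) :
    ∃ q : ℕ → Polynomial ℂ,
      TendstoUniformlyOn (fun n z => (q n).eval z) (Function.extend (↑) f 0) atTop s := by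
  rw [← SetLike.mem_coe, Submodule.topologicalClosure_coe] at hf
  obtain ⟨u, hu, hut⟩ := mem_closure_iff_seq_limit.mp hf
  simp only [Subalgebra.coe_toSubmodule, polynomialFunctions_coe, Set.mem_range] at hu
  choose q hq using hu
  refine ⟨q, ((f.continuousOn_extend_val 0).tendsto_domRestrict_iff_tendstoUniformlyOn
    fun n => (q n).continuous.continuousOn).mp ?_⟩
  convert hut using 2 with n
  · exact hq n
  · ext x
    exact Subtype.val_injective.extend_apply f 0 x

lemma differentiableOn_extend_val_of_mem_closure_polynomialFunctions {s : Set ℂ}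
    [CompactSpace s] {f : C(s, ℂ)}
    (hf : f ∈ (polynomialFunctions s).toSubmodule.topologicalClosure) :
    DifferentiableOn ℂ (Function.extend (↑) f 0) (interior s) := by
  obtain ⟨q, hq⟩ := tendstoUniformlyOn_extend_val_of_mem_closure_polynomialFunctions hf
  exact (hq.mono interior_subset).tendstoLocallyUniformlyOn.differentiableOn
    (Eventually.of_forall fun n => (q n).differentiable.differentiableOn) isOpen_interior

theorem mem_closure_polynomials_of_differentiableOn_ball {X : Type*} [NormedAddCommGroup X]
    [NormedSpace ℂ X] [CompleteSpace X] (J : X →ₗ[ℂ] (ℂ → ℂ))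
    (hA : ∀ f : ℂ → ℂ, ContinuousOn f (closedBall (0:ℂ) 1) →
      DifferentiableOn ℂ f (ball (0:ℂ) 1) →
      ∃ x : X, ∀ z ∈ ball (0:ℂ) 1, J x z = f z)
    (heval : ∀ z ∈ ball (0:ℂ) 1, ∃ K : ℝ, ∀ x : X, ‖J x z‖ ≤ K * ‖x‖)
    {H : ℂ → ℂ} {R : ℝ} (hR : 1 < R) (hH : DifferentiableOn ℂ H (ball (0:ℂ) R))
    {x₀ : X} (hx₀ : ∀ z ∈ ball (0:ℂ) 1, J x₀ z = H z) :
    x₀ ∈ closure {x : X | ∃ q : Polynomial ℂ, ∀ z ∈ ball (0:ℂ) 1, J x z = q.eval z} := by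
  set A := (polynomialFunctions (closedBall (0:ℂ) 1)).toSubmodule.topologicalClosure
  have : CompleteSpace A := (Submodule.isClosed_topologicalClosure _).completeSpace_coe
  let ρ : A →L[ℂ] (ball (0:ℂ) 1 → ℂ) := ContinuousLinearMap.pi fun z =>
    (ContinuousMap.evalCLM ℂ ⟨z.1, ball_subset_closedBall z.2⟩).comp A.subtypeL
  let j : X →L[ℂ] (ball (0:ℂ) 1 → ℂ) :=
    ⟨LinearMap.pi fun z => (LinearMap.proj z.1).comp J, continuous_pi fun z => by
      obtain ⟨K, hK⟩ := heval z z.2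
      exact AddMonoidHomClass.continuous_of_bound ((LinearMap.proj z.1).comp J) K hK⟩
  have hρj : Set.range ρ ⊆ Set.range j := by
    rintro _ ⟨a, rfl⟩
    obtain ⟨x, hx⟩ := hA _ (a.1.continuousOn_extend_val 0)
      ((differentiableOn_extend_val_of_mem_closure_polynomialFunctions a.2).mono
        (by rw [interior_closedBall _ one_ne_zero]))
    refine ⟨x, funext fun z => ?_⟩
    simpa [ρ, j, hx z z.2] using
      Subtype.val_injective.extend_apply (a.1 : closedBall (0:ℂ) 1 → ℂ) 0 ⟨z, _⟩
  obtain ⟨q, hq⟩ := exists_polynomial_tendstoUniformlyOn_closedBall zero_le_one hR hH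
  have hHc : ContinuousOn H (closedBall (0:ℂ) 1) :=
    hH.continuousOn.mono (closedBall_subset_ball hR)
  have hlim := (hHc.tendsto_domRestrict_iff_tendstoUniformlyOn
    fun n => (q n).continuous.continuousOn).mpr hq
  have hmem : ∀ n, (q n).toContinuousMapOn (closedBall (0:ℂ) 1) ∈ A := fun n =>
    Submodule.le_topologicalClosure _ ⟨q n, trivial, rfl⟩
  have hmem₀ : ⟨_, hHc.domRestrict⟩ ∈ A :=
    (Submodule.isClosed_topologicalClosure _ : IsClosed (A : Set _)).mem_of_tendsto hlim
      (Eventually.of_forall hmem)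
  obtain ⟨x, hxj, hxt⟩ := ρ.exists_tendsto_of_range_subset j hρj (a := fun n => ⟨_, hmem n⟩)
    (a₀ := ⟨_, hmem₀⟩) (tendsto_subtype_rng.mpr hlim) (x₀ := x₀) (funext fun z => hx₀ z z.2)
  exact mem_closure_of_tendsto hxt
    (Eventually.of_forall fun n => ⟨q n, fun z hz => congrFun (hxj n) ⟨z, hz⟩⟩)

lemma DifferentiableOn.comp_ofReal_mul_ball {f : ℂ → ℂ}
    (hf : DifferentiableOn ℂ f (ball (0:ℂ) 1)) {r : ℝ} (hr : 0 < r) :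
    DifferentiableOn ℂ (fun w => f (r * w)) (ball (0:ℂ) r⁻¹) := by
  refine hf.comp (by fun_prop) fun w hw => ?_
  rw [mem_ball_zero_iff, norm_mul, Complex.norm_real, Real.norm_of_nonneg hr.le] at *
  exact (lt_inv_mul_iff₀ hr).mp (by rwa [mul_one])

theorem stmt17_general {X : Type*} [NormedAddCommGroup X] [NormedSpace ℂ X] [CompleteSpace X]
    (J : X →ₗ[ℂ] (ℂ → ℂ)) (C : ℝ)
    -- the elements of X are analytic on the disc
    (hAnal : ∀ x : X, DifferentiableOn ℂ (J x) (ball (0:ℂ) 1))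
    -- the disc algebra is contained in X
    (hA : ∀ f : ℂ → ℂ, ContinuousOn f (closedBall (0:ℂ) 1) →
      DifferentiableOn ℂ f (ball (0:ℂ) 1) →
      ∃ x : X, ∀ z ∈ ball (0:ℂ) 1, J x z = f z)
    -- closed under dilations, with uniform norm bound C
    (hdil : ∀ x : X, ∀ r : ℝ, 0 < r → r < 1 →
      ∃ xr : X, (∀ z ∈ ball (0:ℂ) 1, J xr z = J x ((r:ℂ) * z)) ∧ ‖xr‖ ≤ C * ‖x‖)
    -- bounded point evaluations
    (heval : ∀ z ∈ ball (0:ℂ) 1, ∃ K : ℝ, ∀ x : X, ‖J x z‖ ≤ K * ‖x‖)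
    (g : ℂ → ℂ) (hg : DifferentiableOn ℂ g (ball (0:ℂ) 1)) :
    ((∃ M : ℝ, ∀ x : X, ∀ z ∈ ball (0:ℂ) 1, ‖Tg g (J x) z‖ ≤ M * ‖x‖) ↔
      (∃ M : ℝ, ∀ x ∈ closure {x : X | ∃ q : Polynomial ℂ,
          ∀ z ∈ ball (0:ℂ) 1, J x z = Polynomial.eval z q},
        ∀ z ∈ ball (0:ℂ) 1, ‖Tg g (J x) z‖ ≤ M * ‖x‖)) ∧
    (∀ M : ℝ, 0 ≤ M →
      (∀ x ∈ closure {x : X | ∃ q : Polynomial ℂ,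
          ∀ z ∈ ball (0:ℂ) 1, J x z = Polynomial.eval z q},
        ∀ z ∈ ball (0:ℂ) 1, ‖Tg g (J x) z‖ ≤ M * ‖x‖) →
      ∀ x : X, ∀ z ∈ ball (0:ℂ) 1, ‖Tg g (J x) z‖ ≤ C * M * ‖x‖) := by
  have hg' : ContinuousOn (deriv g) (ball (0:ℂ) 1) :=
    (hg.analyticOnNhd isOpen_ball).deriv.continuousOn
  have bound : ∀ M : ℝ, 0 ≤ M →
      (∀ x ∈ closure {x : X | ∃ q : Polynomial ℂ,
          ∀ z ∈ ball (0:ℂ) 1, J x z = Polynomial.eval z q},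
        ∀ z ∈ ball (0:ℂ) 1, ‖Tg g (J x) z‖ ≤ M * ‖x‖) →
      ∀ x : X, ∀ z ∈ ball (0:ℂ) 1, ‖Tg g (J x) z‖ ≤ C * M * ‖x‖ := by
    intro M hM hP x z hz
    refine le_of_tendsto (tendsto_Tg_dilation (hAnal x).continuousOn hg' hz).norm ?_
    filter_upwards [Ioo_mem_nhdsLT zero_lt_one] with r hr
    obtain ⟨xr, hxr, hxr_norm⟩ := hdil x r hr.1 hr.2
    have hxrP := mem_closure_polynomials_of_differentiableOn_ball J hA heval
      ((one_lt_inv₀ hr.1).mpr hr.2) ((hAnal x).comp_ofReal_mul_ball hr.1) hxr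
    calc ‖Tg g (fun w => J x (r * w)) z‖ = ‖Tg g (J xr) z‖ := by rw [Tg_congr hxr hz]
      _ ≤ M * ‖xr‖ := hP xr hxrP z hz
      _ ≤ M * (C * ‖x‖) := mul_le_mul_of_nonneg_left hxr_norm hM
      _ = C * M * ‖x‖ := by ring
  refine ⟨⟨fun ⟨M, hM⟩ => ⟨M, fun x _ => hM x⟩, fun ⟨M, hM⟩ => ⟨C * max M 0,
    bound _ (le_max_right _ _) fun x hx z hz => (hM x hx z hz).trans ?_⟩⟩, bound⟩
  gcongr
  exact le_max_left _ _

theorem stmt17 {X : Type*} [NormedAddCommGroup X] [NormedSpace ℂ X] [CompleteSpace X]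
    (J : X →ₗ[ℂ] (ℂ → ℂ)) (C : ℝ) (hC : 0 < C)
    -- the elements of X are analytic on the disc
    (hAnal : ∀ x : X, DifferentiableOn ℂ (J x) (ball (0:ℂ) 1))
    -- the disc algebra is contained in X
    (hA : ∀ f : ℂ → ℂ, ContinuousOn f (closedBall (0:ℂ) 1) →
      DifferentiableOn ℂ f (ball (0:ℂ) 1) →
      ∃ x : X, ∀ z ∈ ball (0:ℂ) 1, J x z = f z)
    -- closed under dilations, with uniform norm bound C
    (hdil : ∀ x : X, ∀ r : ℝ, 0 < r → r < 1 →
      ∃ xr : X, (∀ z ∈ ball (0:ℂ) 1, J xr z = J x ((r:ℂ) * z)) ∧ ‖xr‖ ≤ C * ‖x‖)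
    -- bounded point evaluations
    (heval : ∀ z ∈ ball (0:ℂ) 1, ∃ K : ℝ, ∀ x : X, ‖J x z‖ ≤ K * ‖x‖)
    (g : ℂ → ℂ) (hg : DifferentiableOn ℂ g (ball (0:ℂ) 1)) :
    ((∃ M : ℝ, ∀ x : X, ∀ z ∈ ball (0:ℂ) 1, ‖Tg g (J x) z‖ ≤ M * ‖x‖) ↔
      (∃ M : ℝ, ∀ x ∈ closure {x : X | ∃ q : Polynomial ℂ,
          ∀ z ∈ ball (0:ℂ) 1, J x z = Polynomial.eval z q},
        ∀ z ∈ ball (0:ℂ) 1, ‖Tg g (J x) z‖ ≤ M * ‖x‖)) ∧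
    (∀ M : ℝ, 0 ≤ M →
      (∀ x ∈ closure {x : X | ∃ q : Polynomial ℂ,
          ∀ z ∈ ball (0:ℂ) 1, J x z = Polynomial.eval z q},
        ∀ z ∈ ball (0:ℂ) 1, ‖Tg g (J x) z‖ ≤ M * ‖x‖) →
      ∀ x : X, ∀ z ∈ ball (0:ℂ) 1, ‖Tg g (J x) z‖ ≤ C * M * ‖x‖) :=
  stmt17_general J C hAnal hA hdil heval g hg
end
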